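/- Let T : A(X,E) → A(Y,F) be a linear map that preserves common zeros, where A(X,E) and A(Y,F) are almost normally multiplicative vector subspaces of C(X,E) and C(Y,F). Then for every x ∈ X the set Z_x := ⋂_{f ∈ A(X,E), f(x)=0} cl_{βY}(ι_Y(Z(Tf))) is nonempty. -/

import Mathlib

open Set Filter Topology

/-- The zero set of a function. -/
def zeroSet {α β : Type*} [Zero β] (f : α → β) : Set α := {x | f x = 0}

/-- A vector subspace `AX` of `C(X)` is almost normal if all its members are continuous and
for every pair of subsets `P`, `Q` of `X` whose closures in the Stone–Čech compactification
`βX` are disjoint, there is `f ∈ AX` with `f = 0` on `P` and `f = 1` on `Q`. -/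
def AlmostNormal (X : Type*) [TopologicalSpace X] (AX : Submodule ℝ (X → ℝ)) : Prop :=
  (∀ φ ∈ AX, Continuous φ) ∧
  ∀ P Q : Set X,
    Disjoint (closure (stoneCechUnit '' P)) (closure (stoneCechUnit '' Q)) →
      ∃ φ ∈ AX, (∀ x ∈ P, φ x = 0) ∧ (∀ x ∈ Q, φ x = 1)

/-- A vector subspace `AXE` of `C(X,E)` is almost normally multiplicative if all its members
are continuous, it contains the constant functions, and there is an almost normal subspace
`AX` of `C(X)` such that `φ • f ∈ AXE` whenever `φ ∈ AX` and `f ∈ AXE`. -/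
def AlmostNormallyMultiplicative (X E : Type*) [TopologicalSpace X] [TopologicalSpace E]
    [AddCommGroup E] [Module ℝ E] (AXE : Submodule ℝ (X → E)) : Prop :=
  (∀ f ∈ AXE, Continuous f) ∧
  (∀ u : E, (fun _ : X => u) ∈ AXE) ∧
  ∃ AX : Submodule ℝ (X → ℝ), AlmostNormal X AX ∧
    ∀ φ ∈ AX, ∀ f ∈ AXE, (fun x => φ x • f x) ∈ AXE

/-- A map `T` between subspaces of `C(X,E)` and `C(Y,F)` preserves common zeros if for every
`k ∈ ℕ` and every finite family `f₁, …, f_k`, the zero sets of the `fᵢ` have a common point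
iff the zero sets of the `T fᵢ` do. -/
def PreservesCommonZeros {X Y E F : Type*} [TopologicalSpace X] [TopologicalSpace Y]
    [AddCommGroup E] [Module ℝ E] [AddCommGroup F] [Module ℝ F]
    {AXE : Submodule ℝ (X → E)} {AYF : Submodule ℝ (Y → F)}
    (T : AXE → AYF) : Prop :=
  ∀ (k : ℕ) (f : Fin (k + 1) → AXE),
    (⋂ i, zeroSet ((f i : X → E))).Nonempty ↔ (⋂ i, zeroSet ((T (f i) : Y → F))).Nonempty

/-- The set `Z_x ⊆ βY`: the intersection, over all `f` in the subspace vanishing at `x`, of the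
closures in `βY` of the zero sets of `T f`. -/
def Zx {X Y E F : Type*} [TopologicalSpace X] [TopologicalSpace Y]
    [AddCommGroup E] [Module ℝ E] [AddCommGroup F] [Module ℝ F]
    {AXE : Submodule ℝ (X → E)} {AYF : Submodule ℝ (Y → F)}
    (T : AXE → AYF) (x : X) : Set (StoneCech Y) :=
  ⋂ (f : AXE) (_ : (f : X → E) x = 0), closure (stoneCechUnit '' zeroSet ((T f : Y → F)))

/-! The sets `closure (ι_Y '' Z(T f))`, for `f` vanishing at `x`, are closed in the compact
space `βY` and have the finite intersection property: finitely many such `f` share the zero `x`,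
so the `T f` share a zero in `Y`. -/

theorem PreservesCommonZeros.exists_common_zero {X Y E F ι : Type*} [TopologicalSpace X]
    [TopologicalSpace Y] [AddCommGroup E] [Module ℝ E] [AddCommGroup F] [Module ℝ F]
    {AXE : Submodule ℝ (X → E)} {AYF : Submodule ℝ (Y → F)} {T : AXE → AYF}
    (hT : PreservesCommonZeros T) (u : Finset ι) (f : ι → AXE) {x : X}
    (hx : ∀ i ∈ u, (f i : X → E) x = 0) : ∃ y, ∀ i ∈ u, (T (f i) : Y → F) y = 0 := by
  -- Prepending `0` makes the family nonempty, as `PreservesCommonZeros` requires.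
  let g : Fin (u.card + 1) → AXE := Fin.cons 0 fun k => f (u.equivFin.symm k)
  have hg : x ∈ ⋂ k, zeroSet (g k : X → E) := by
    refine mem_iInter.2 (Fin.cases ?_ fun k => ?_)
    · simp [g, zeroSet]
    · exact hx _ (u.equivFin.symm k).2
  obtain ⟨y, hy⟩ := (hT u.card g).1 ⟨x, hg⟩
  refine ⟨y, fun i hi => ?_⟩
  simpa [g, zeroSet] using mem_iInter.1 hy (u.equivFin ⟨i, hi⟩).succ

theorem iInter_closure_image_nonempty {Y K ι : Type*} [TopologicalSpace K] [CompactSpace K]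
    (j : Y → K) (Z : ι → Set Y) (hZ : ∀ u : Finset ι, (⋂ i ∈ u, Z i).Nonempty) :
    (⋂ i, closure (j '' Z i)).Nonempty := by
  simpa using isCompact_univ.inter_iInter_nonempty (fun i => closure (j '' Z i))
    (fun _ => isClosed_closure) fun u => by
      obtain ⟨y, hy⟩ := hZ u
      refine ⟨j y, trivial, mem_iInter₂.2 fun i hi => subset_closure ?_⟩
      exact mem_image_of_mem j (mem_iInter₂.1 hy i hi)

theorem zx_nonempty {X Y E F : Type*}
    [TopologicalSpace X]
    [TopologicalSpace Y]
    [AddCommGroup E] [Module ℝ E]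
    [AddCommGroup F] [Module ℝ F]
    {AXE : Submodule ℝ (X → E)} {AYF : Submodule ℝ (Y → F)}
    (T : AXE →ₗ[ℝ] AYF) (hT : PreservesCommonZeros (T : AXE → AYF))
    (x : X) : (Zx (T : AXE → AYF) x).Nonempty := by
  rw [Zx, ← iInter_subtype (p := fun f : AXE => (f : X → E) x = 0)
    (s := fun f => closure (stoneCechUnit '' zeroSet (T f.1 : Y → F)))]
  refine iInter_closure_image_nonempty stoneCechUnit _ fun u => ?_
  obtain ⟨y, hy⟩ := hT.exists_common_zero u (fun f => f.1) fun f _ => f.2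
  exact ⟨y, mem_iInter₂.2 hy⟩
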